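/- There exists a homeomorphism ω : F^ℤ → A_T from the space of bisequences over the residue field F (with the product topology) to the attractor A_T = ⋂_{n≥1} Tⁿ(R²) such that ω ∘ σ = T ∘ ω, where σ is the two-sided shift map. In particular, T restricted to A_T is topologically conjugate to the full shift on q symbols. -/

import Mathlib

open scoped Classical
open MeasureTheory Filter

noncomputable section

/-- A complete, locally compact non-Archimedean field with residue field of
order `q`, absolute value normalized so that a uniformizer has norm `1/q`.
`reps` is a set of `q` coset representatives for the residue field: they cover
the ring of integers by discs of radius `1/q` and are pairwise at distance
`> 1/q`. -/
structure NAField (K : Type*) [NormedField K] where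
  na : IsNonarchimedean (fun x : K => ‖x‖)
  complete : CompleteSpace K
  locCompact : LocallyCompactSpace K
  q : ℕ
  one_lt_q : 1 < q
  valGroup : ∀ x : K, x ≠ 0 → ∃ n : ℤ, ‖x‖ = (q : ℝ) ^ n
  exists_unif : ∃ ϖ : K, ‖ϖ‖ = (q : ℝ)⁻¹
  reps : Finset K
  card_reps : reps.card = q
  norm_reps : ∀ s ∈ reps, ‖s‖ ≤ 1
  reps_cover : ∀ x : K, ‖x‖ ≤ 1 → ∃ s ∈ reps, ‖x - s‖ ≤ (q : ℝ)⁻¹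
  reps_sep : ∀ s ∈ reps, ∀ t ∈ reps, s ≠ t → (q : ℝ)⁻¹ < ‖s - t‖

variable {K : Type*} [NormedField K]

/-- `f : R → R` is `(1/q)`-Lipschitz on the ring of integers. -/
def NAField.IsLip (F : NAField K) (f : K → K) : Prop :=
  (∀ t : K, ‖t‖ ≤ 1 → ‖f t‖ ≤ 1) ∧
  ∀ t₁ t₂ : K, ‖t₁‖ ≤ 1 → ‖t₂‖ ≤ 1 → ‖f t₁ - f t₂‖ ≤ ((F.q : ℝ))⁻¹ * ‖t₁ - t₂‖

/-- The unit polydisc `R² ⊆ K²`. -/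
def unitPoly (K : Type*) [NormedField K] : Set (K × K) := {p | ‖p.1‖ ≤ 1 ∧ ‖p.2‖ ≤ 1}

/-- Horizontal `δ`-neighborhood `H_δ(f) = {(t, f t + θ) : t ∈ R, |θ| ≤ δ}`. -/
def Hnbhd (f : K → K) (δ : ℝ) : Set (K × K) :=
  {p | ∃ t θ : K, ‖t‖ ≤ 1 ∧ ‖θ‖ ≤ δ ∧ p = (t, f t + θ)}

/-- Vertical `δ`-neighborhood `V_δ(f) = {(f t + θ, t) : t ∈ R, |θ| ≤ δ}`. -/
def Vnbhd (f : K → K) (δ : ℝ) : Set (K × K) :=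
  {p | ∃ t θ : K, ‖t‖ ≤ 1 ∧ ‖θ‖ ≤ δ ∧ p = (f t + θ, t)}

/-- The automorphism `T(x,y) = (a y + b (x^q - x), x)`. -/
def NAField.Tmap (F : NAField K) (a b : K) : K × K → K × K :=
  fun p => (a * p.2 + b * (p.1 ^ F.q - p.1), p.1)

/-- The inverse automorphism `T⁻¹(x,y) = (y, a⁻¹ (x - b (y^q - y)))`. -/
def NAField.Tinv (F : NAField K) (a b : K) : K × K → K × K :=
  fun p => (p.2, a⁻¹ * (p.1 - b * (p.2 ^ F.q - p.2)))

/-- The attractor `A_T = ⋂_{n ≥ 1} Tⁿ(R²)`. -/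
def NAField.Attractor (F : NAField K) (a b : K) : Set (K × K) :=
  ⋂ n ∈ {n : ℕ | 1 ≤ n}, (F.Tmap a b)^[n] '' unitPoly K

/-- The basin of attraction `B_T = ⋃_{n ≥ 1} T⁻ⁿ(R²)`. -/
def NAField.Basin (F : NAField K) (a b : K) : Set (K × K) :=
  ⋃ n ∈ {n : ℕ | 1 ≤ n}, (F.Tmap a b)^[n] ⁻¹' unitPoly K

/-- `T^k` for `k : ℤ`. -/
def NAField.iterZ (F : NAField K) (a b : K) (k : ℤ) : K × K → K × K :=
  if 0 ≤ k then (F.Tmap a b)^[k.toNat] else (F.Tinv a b)^[(-k).toNat]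

/-- The image under the conjugacy `ω` of the cylinder set of bisequences
agreeing with `s` on coordinates `-M, …, M`: points of the attractor whose
itinerary through the residue strips matches `s` on those coordinates. -/
def NAField.Cyl (F : NAField K) (a b : K) (s : ℤ → K) (M : ℕ) : Set (K × K) :=
  {p | p ∈ F.Attractor a b ∧
    ∀ k : ℤ, |k| ≤ (M : ℤ) → ‖(F.iterZ a b k p).1 - s k‖ ≤ ((F.q : ℝ))⁻¹}
/-!
Record the point of an orbit at time `k` as `(x k, x (k - 1))`; orbits of `T` in `R²` are then
the integral bisequences with `x (k + 1) = a x (k - 1) + b (x k ^ q - x k)`, i.e. the fixed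
points of `u ↦ (k ↦ u k ^ q - b⁻¹ (u (k + 1) - a u (k - 1)))`. On a residue disc
`x ^ q - y ^ q = (x - y) σ` with `|σ| ≤ 1/q`, and `|b⁻¹| = 1/q`, so this operator contracts by
`1/q` on bisequences confined to prescribed residue discs. Hence each itinerary `s ∈ F^ℤ` is
shadowed by exactly one orbit, which gives the bijection `ω`; itineraries agreeing on
`[k - n, k + n]` give orbits that are `q^{-(n+1)}`-close at time `k`, which gives continuity,
and compactness of `F^ℤ` makes `ω` a homeomorphism.
-/

open Set Topology

section Ultrametric

variable {E : Type*} [SeminormedAddCommGroup E] [IsUltrametricDist E]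

lemma norm_sub_le_max_norm (x y : E) : ‖x - y‖ ≤ max ‖x‖ ‖y‖ := by
  simpa [sub_eq_add_neg] using IsUltrametricDist.norm_add_le_max x (-y)

lemma norm_sub_le_of_le_of_le {x y z : E} {δ : ℝ} (hx : ‖x - z‖ ≤ δ) (hy : ‖y - z‖ ≤ δ) :
    ‖x - y‖ ≤ δ := by
  rw [← dist_eq_norm] at hx hy ⊢
  exact (dist_triangle_max x z y).trans (max_le hx (dist_comm z y ▸ hy))

end Ultrametric

/-- Banach's fixed point theorem for the sup distance on `ι → E`, which is not the distance of
the product topology used here. -/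
theorem exists_fixedPt_of_forall_dist_le_mul {ι E : Type*} [MetricSpace E] [CompleteSpace E]
    {Φ : (ι → E) → ι → E} (hΦ : Continuous Φ) {X : Set (ι → E)} (hX : IsClosed X)
    (hΦX : MapsTo Φ X X) {r : ℝ} (hr : r < 1)
    (hcontr : ∀ u ∈ X, ∀ v ∈ X, ∀ δ : ℝ, (∀ k, dist (u k) (v k) ≤ δ) →
      ∀ k, dist (Φ u k) (Φ v k) ≤ r * δ)
    {u₀ : ι → E} (hu₀ : u₀ ∈ X) {C : ℝ} (hC : ∀ k, dist (u₀ k) (Φ u₀ k) ≤ C) :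
    ∃ u ∈ X, Φ u = u := by
  have hstep : ∀ n k, dist (Φ^[n] u₀ k) (Φ^[n + 1] u₀ k) ≤ C * r ^ n := by
    intro n
    induction n with
    | zero => simpa using hC
    | succ n ih =>
      intro k
      rw [Function.iterate_succ_apply', Function.iterate_succ_apply' Φ (n + 1),
        show C * r ^ (n + 1) = r * (C * r ^ n) by ring]
      exact hcontr _ (hΦX.iterate n hu₀) _ (hΦX.iterate (n + 1) hu₀) _ ih k
  choose u hu using fun k => cauchySeq_tendsto_of_complete
    (cauchySeq_of_le_geometric r C hr (f := fun n => Φ^[n] u₀ k) (hstep · k))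
  have hlim : Tendsto (fun n => Φ^[n] u₀) atTop (𝓝 u) := tendsto_pi_nhds.2 hu
  have hlim' : Tendsto (fun n => Φ^[n + 1] u₀) atTop (𝓝 (Φ u)) := by
    simp only [Function.iterate_succ_apply']
    exact (hΦ.tendsto u).comp hlim
  exact ⟨u, hX.mem_of_tendsto hlim (.of_forall fun n => hΦX.iterate n hu₀),
    tendsto_nhds_unique hlim' (hlim.comp (tendsto_add_atTop_nat 1))⟩

lemma Equiv.Perm.zpow_apply_of_forall_apply_eq {α : Type*} (τ : Equiv.Perm α) {P : ℤ → α}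
    (hP : ∀ k, τ (P k) = P (k + 1)) (k : ℤ) : (τ ^ k) (P 0) = P k := by
  induction k using Int.induction_on with
  | zero => rfl
  | succ i ih => rw [add_comm, zpow_add, zpow_one, Equiv.Perm.mul_apply, ih, hP, add_comm]
  | pred i ih =>
    apply τ.injective
    rw [← Equiv.Perm.mul_apply, ← zpow_one_add, hP, sub_add_cancel, add_sub_cancel, ih]

abbrev unitBallSubring (K : Type*) [NormedField K] [IsUltrametricDist K] : ValuationSubring K :=
  (NormedField.valuation (K := K)).valuationSubring

section UltrametricField

variable [IsUltrametricDist K]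

lemma mem_unitBallSubring {x : K} : x ∈ unitBallSubring K ↔ ‖x‖ ≤ 1 := by
  simp [Valuation.mem_valuationSubring_iff, ← NNReal.coe_le_coe]

lemma residue_eq_zero_iff_norm_lt_one (z : unitBallSubring K) :
    IsLocalRing.residue _ z = 0 ↔ ‖(z : K)‖ < 1 := by
  rw [IsLocalRing.residue_eq_zero_iff, Valuation.mem_maximalIdeal_iff]
  simp [← NNReal.coe_lt_coe]

lemma norm_sub_mul_le_of_norm_le_one {a x y : K} (ha : ‖a‖ ≤ 1) {δ : ℝ} (hx : ‖x‖ ≤ δ)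
    (hy : ‖y‖ ≤ δ) : ‖x - a * y‖ ≤ δ := by
  refine (norm_sub_le_max_norm _ _).trans (max_le hx ?_)
  rw [norm_mul]
  exact (mul_le_of_le_one_left (norm_nonneg _) ha).trans hy

end UltrametricField

namespace NAField

lemma isUltrametricDist (F : NAField K) : IsUltrametricDist K :=
  IsUltrametricDist.isUltrametricDist_of_isNonarchimedean_norm F.na

variable (F : NAField K)

lemma one_lt_cast_q : 1 < (F.q : ℝ) := by exact_mod_cast F.one_lt_q

lemma q_inv_lt_one : (F.q : ℝ)⁻¹ < 1 := inv_lt_one_of_one_lt₀ F.one_lt_cast_q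

lemma q_inv_nonneg : 0 ≤ (F.q : ℝ)⁻¹ := inv_nonneg.2 (Nat.cast_nonneg _)

variable {F}

lemma norm_le_q_inv_of_norm_lt_one {x : K} (hx : ‖x‖ < 1) : ‖x‖ ≤ (F.q : ℝ)⁻¹ := by
  rcases eq_or_ne x 0 with rfl | hx0
  · simp [F.q_inv_nonneg]
  obtain ⟨n, hn⟩ := F.valGroup x hx0
  rw [hn] at hx ⊢
  have hn0 : n ≤ -1 := by
    by_contra! h
    exact (one_le_zpow₀ F.one_lt_cast_q.le (by omega : 0 ≤ n)).not_gt hx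
  simpa using zpow_le_zpow_right₀ F.one_lt_cast_q.le hn0

lemma ne_zero_of_q_le_norm {b : K} (hb : (F.q : ℝ) ≤ ‖b‖) : b ≠ 0 :=
  norm_pos_iff.1 (one_pos.trans (F.one_lt_cast_q.trans_le hb))

lemma norm_inv_le_q_inv {b : K} (hb : (F.q : ℝ) ≤ ‖b‖) : ‖b⁻¹‖ ≤ (F.q : ℝ)⁻¹ := by
  rw [norm_inv]
  exact inv_anti₀ (one_pos.trans F.one_lt_cast_q) hb

section Residue

variable [IsUltrametricDist K] (F)

lemma bijective_residue_reps :
    Function.Bijective fun s : F.reps =>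
      IsLocalRing.residue (unitBallSubring K) ⟨s, mem_unitBallSubring.2 (F.norm_reps s s.2)⟩ := by
  constructor
  · intro s t hst
    rw [← sub_eq_zero, ← map_sub, residue_eq_zero_iff_norm_lt_one] at hst
    by_contra hne
    exact (F.reps_sep s s.2 t t.2 (Subtype.coe_ne_coe.2 hne)).not_ge
      (norm_le_q_inv_of_norm_lt_one hst)
  · intro y
    obtain ⟨⟨x, hx⟩, rfl⟩ := IsLocalRing.residue_surjective y
    obtain ⟨s, hs, hxs⟩ := F.reps_cover x (mem_unitBallSubring.1 hx)
    refine ⟨⟨s, hs⟩, ?_⟩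
    rw [← sub_eq_zero, ← map_sub, residue_eq_zero_iff_norm_lt_one]
    rw [norm_sub_rev] at hxs
    exact hxs.trans_lt F.q_inv_lt_one

lemma natCard_residueField : Nat.card (IsLocalRing.ResidueField (unitBallSubring K)) = F.q := by
  rw [← Nat.card_eq_of_bijective _ (bijective_residue_reps F), Nat.card_eq_fintype_card,
    Fintype.card_coe, F.card_reps]

lemma residueField_pow_q (z : IsLocalRing.ResidueField (unitBallSubring K)) : z ^ F.q = z := by
  let _ := Fintype.ofBijective _ (bijective_residue_reps F)
  rw [← F.natCard_residueField, Nat.card_eq_fintype_card]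
  exact FiniteField.pow_card z

lemma residueField_natCast_q : (F.q : IsLocalRing.ResidueField (unitBallSubring K)) = 0 := by
  let _ := Fintype.ofBijective _ (bijective_residue_reps F)
  rw [← F.natCard_residueField, Nat.card_eq_fintype_card]
  exact FiniteField.cast_card_eq_zero _

variable {F}

lemma norm_pow_q_sub_self_le {x : K} (hx : ‖x‖ ≤ 1) : ‖x ^ F.q - x‖ ≤ (F.q : ℝ)⁻¹ := by
  let z : unitBallSubring K := ⟨x, mem_unitBallSubring.2 hx⟩
  refine norm_le_q_inv_of_norm_lt_one ((residue_eq_zero_iff_norm_lt_one (z ^ F.q - z)).1 ?_)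
  rw [map_sub, map_pow, F.residueField_pow_q, sub_self]

/-- `x ^ q - y ^ q = σ (x - y)` with `σ = ∑ xⁱ yᵠ⁻¹⁻ⁱ ≡ q yᵠ⁻¹ ≡ 0` in the residue field. -/
lemma norm_pow_q_sub_pow_q_le {x y : K} (hx : ‖x‖ ≤ 1) (hy : ‖y‖ ≤ 1) (hxy : ‖x - y‖ < 1) :
    ‖x ^ F.q - y ^ F.q‖ ≤ (F.q : ℝ)⁻¹ * ‖x - y‖ := by
  let z : unitBallSubring K := ⟨x, mem_unitBallSubring.2 hx⟩
  let w : unitBallSubring K := ⟨y, mem_unitBallSubring.2 hy⟩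
  let σ := ∑ i ∈ Finset.range F.q, z ^ i * w ^ (F.q - 1 - i)
  have hzw : IsLocalRing.residue _ z = IsLocalRing.residue _ w := by
    rw [← sub_eq_zero, ← map_sub, residue_eq_zero_iff_norm_lt_one]
    exact hxy
  have hσ : IsLocalRing.residue _ σ = 0 := by
    have hterm : ∀ i ∈ Finset.range F.q, IsLocalRing.residue _ (z ^ i * w ^ (F.q - 1 - i)) =
        IsLocalRing.residue _ w ^ (F.q - 1) := by
      intro i hi
      have := Finset.mem_range.1 hi
      rw [map_mul, map_pow, map_pow, hzw, ← pow_add, Nat.add_sub_cancel' (by omega)]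
    rw [map_sum, Finset.sum_congr rfl hterm, Finset.sum_const, Finset.card_range, nsmul_eq_mul,
      F.residueField_natCast_q, zero_mul]
  have hfactor : x ^ F.q - y ^ F.q = (σ : K) * (x - y) := by
    rw [← geom_sum₂_mul]
    simp [σ, z, w]
  rw [hfactor, norm_mul]
  exact mul_le_mul_of_nonneg_right
    (norm_le_q_inv_of_norm_lt_one ((residue_eq_zero_iff_norm_lt_one σ).1 hσ)) (norm_nonneg _)

end Residue

section Orbits

variable (F) (a b : K)

/-- An orbit of `T` in `R²`, recorded by first coordinates: its point at time `k` is
`(x k, x (k - 1))`. -/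
def IsOrbit (x : ℤ → K) : Prop :=
  (∀ k, ‖x k‖ ≤ 1) ∧ ∀ k, x (k + 1) = a * x (k - 1) + b * (x k ^ F.q - x k)

def orbitOp (u : ℤ → K) : ℤ → K :=
  fun k => u k ^ F.q - b⁻¹ * (u (k + 1) - a * u (k - 1))

variable {F a b}

lemma continuous_orbitOp : Continuous (F.orbitOp a b) :=
  continuous_pi fun k => by unfold orbitOp; fun_prop

lemma orbitOp_eq_self_iff (hb : b ≠ 0) {u : ℤ → K} :
    F.orbitOp a b u = u ↔ ∀ k, u (k + 1) = a * u (k - 1) + b * (u k ^ F.q - u k) := by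
  simp only [funext_iff, orbitOp]
  refine forall_congr' fun k => ⟨fun h => ?_, fun h => ?_⟩
  · field_simp at h
    linear_combination -h
  · rw [h]
    field_simp
    ring

lemma IsOrbit.orbitOp_eq (hb : b ≠ 0) {x : ℤ → K} (hx : F.IsOrbit a b x) :
    F.orbitOp a b x = x :=
  (orbitOp_eq_self_iff hb).2 hx.2

variable [IsUltrametricDist K]

lemma norm_orbitOp_sub_le (ha : ‖a‖ ≤ 1) (hb : (F.q : ℝ) ≤ ‖b‖) {u v : ℤ → K} {k : ℤ}
    (hu : ‖u k‖ ≤ 1) (hv : ‖v k‖ ≤ 1) (huv : ‖u k - v k‖ < 1) {δ : ℝ}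
    (hk : ‖u k - v k‖ ≤ δ) (hsucc : ‖u (k + 1) - v (k + 1)‖ ≤ δ)
    (hpred : ‖u (k - 1) - v (k - 1)‖ ≤ δ) :
    ‖F.orbitOp a b u k - F.orbitOp a b v k‖ ≤ (F.q : ℝ)⁻¹ * δ := by
  have heq : F.orbitOp a b u k - F.orbitOp a b v k = (u k ^ F.q - v k ^ F.q) -
      b⁻¹ * ((u (k + 1) - v (k + 1)) - a * (u (k - 1) - v (k - 1))) := by
    simp only [orbitOp]; ring
  rw [heq]
  refine (norm_sub_le_max_norm _ _).trans (max_le ?_ ?_)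
  · exact (norm_pow_q_sub_pow_q_le hu hv huv).trans
      (mul_le_mul_of_nonneg_left hk F.q_inv_nonneg)
  · rw [norm_mul]
    exact mul_le_mul (norm_inv_le_q_inv hb) (norm_sub_mul_le_of_norm_le_one ha hsucc hpred)
      (norm_nonneg _) F.q_inv_nonneg

lemma norm_le_one_of_norm_sub_le {x s : K} (hxs : ‖x - s‖ ≤ (F.q : ℝ)⁻¹) (hs : ‖s‖ ≤ 1) :
    ‖x‖ ≤ 1 := by
  simpa using norm_sub_le_of_le_of_le (hxs.trans F.q_inv_lt_one.le) (y := 0) (by simpa using hs)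

lemma mapsTo_orbitOp (ha : ‖a‖ ≤ 1) (hb : (F.q : ℝ) ≤ ‖b‖) {s : ℤ → K}
    (hs : ∀ k, ‖s k‖ ≤ 1) :
    MapsTo (F.orbitOp a b) {u | ∀ k, ‖u k - s k‖ ≤ (F.q : ℝ)⁻¹}
      {u | ∀ k, ‖u k - s k‖ ≤ (F.q : ℝ)⁻¹} := by
  intro u hu k
  have hint : ∀ j, ‖u j‖ ≤ 1 := fun j => norm_le_one_of_norm_sub_le (hu j) (hs j)
  have heq : F.orbitOp a b u k - s k = (u k ^ F.q - s k ^ F.q) +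
      ((s k ^ F.q - s k) - b⁻¹ * (u (k + 1) - a * u (k - 1))) := by
    simp only [orbitOp]; ring
  rw [heq]
  refine (IsUltrametricDist.norm_add_le_max _ _).trans (max_le ?_ ?_)
  · exact (norm_pow_q_sub_pow_q_le (hint k) (hs k) ((hu k).trans_lt F.q_inv_lt_one)).trans
      (mul_le_of_le_one_right F.q_inv_nonneg ((hu k).trans F.q_inv_lt_one.le))
  · refine (norm_sub_le_max_norm _ _).trans (max_le (norm_pow_q_sub_self_le (hs k)) ?_)
    rw [norm_mul]
    exact (mul_le_of_le_one_right (norm_nonneg _)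
      (norm_sub_mul_le_of_norm_le_one ha (hint _) (hint _))).trans (norm_inv_le_q_inv hb)

theorem exists_isOrbit_norm_sub_le [CompleteSpace K] (ha : ‖a‖ ≤ 1) (hb : (F.q : ℝ) ≤ ‖b‖)
    {s : ℤ → K} (hs : ∀ k, ‖s k‖ ≤ 1) :
    ∃ x, F.IsOrbit a b x ∧ ∀ k, ‖x k - s k‖ ≤ (F.q : ℝ)⁻¹ := by
  let X : Set (ℤ → K) := {u | ∀ k, ‖u k - s k‖ ≤ (F.q : ℝ)⁻¹}
  have hX : IsClosed X := by
    simp only [X, Set.ofPred_forall]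
    exact isClosed_iInter fun k =>
      isClosed_le ((continuous_apply k).sub continuous_const).norm continuous_const
  have hint : ∀ u ∈ X, ∀ k, ‖u k‖ ≤ 1 := fun u hu k => norm_le_one_of_norm_sub_le (hu k) (hs k)
  have hmaps : MapsTo (F.orbitOp a b) X X := mapsTo_orbitOp ha hb hs
  have hcontr : ∀ u ∈ X, ∀ v ∈ X, ∀ δ : ℝ, (∀ k, dist (u k) (v k) ≤ δ) →
      ∀ k, dist (F.orbitOp a b u k) (F.orbitOp a b v k) ≤ (F.q : ℝ)⁻¹ * δ := by
    intro u hu v hv δ hδ k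
    simp only [dist_eq_norm] at hδ ⊢
    have huv : ‖u k - v k‖ ≤ (F.q : ℝ)⁻¹ := norm_sub_le_of_le_of_le (hu k) (hv k)
    exact norm_orbitOp_sub_le ha hb (hint u hu k) (hint v hv k) (huv.trans_lt F.q_inv_lt_one)
      (hδ k) (hδ _) (hδ _)
  have hsX : s ∈ X := fun k => by simp [F.q_inv_nonneg]
  obtain ⟨x, hxX, hfix⟩ := exists_fixedPt_of_forall_dist_le_mul continuous_orbitOp hX hmaps
    F.q_inv_lt_one hcontr hsX (C := (F.q : ℝ)⁻¹)
    (fun k => by rw [dist_comm, dist_eq_norm]; exact hmaps hsX k)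
  exact ⟨x, ⟨hint x hxX, (orbitOp_eq_self_iff (ne_zero_of_q_le_norm hb)).1 hfix⟩, hxX⟩

lemma IsOrbit.norm_sub_le_of_forall_mem_Icc (ha : ‖a‖ ≤ 1) (hb : (F.q : ℝ) ≤ ‖b‖)
    {x y : ℤ → K} (hx : F.IsOrbit a b x) (hy : F.IsOrbit a b y) (n : ℕ) (k : ℤ)
    (h : ∀ j ∈ Finset.Icc (k - n) (k + n), ‖x j - y j‖ ≤ (F.q : ℝ)⁻¹) :
    ‖x k - y k‖ ≤ (F.q : ℝ)⁻¹ ^ (n + 1) := by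
  induction n generalizing k with
  | zero => simpa using h k (by simp)
  | succ n ih =>
    have ih' : ∀ j, k - 1 ≤ j → j ≤ k + 1 → ‖x j - y j‖ ≤ (F.q : ℝ)⁻¹ ^ (n + 1) :=
      fun j hj₁ hj₂ => ih j fun i hi => h i (by simp only [Finset.mem_Icc] at hi ⊢; omega)
    have hk := h k (by simp only [Finset.mem_Icc]; omega)
    rw [← hx.orbitOp_eq (ne_zero_of_q_le_norm hb), ← hy.orbitOp_eq (ne_zero_of_q_le_norm hb),
      pow_succ']
    exact norm_orbitOp_sub_le ha hb (hx.1 k) (hy.1 k) (hk.trans_lt F.q_inv_lt_one)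
      (ih' k (by omega) (by omega)) (ih' _ (by omega) le_rfl) (ih' _ le_rfl (by omega))

lemma IsOrbit.eq_of_forall_norm_sub_le (ha : ‖a‖ ≤ 1) (hb : (F.q : ℝ) ≤ ‖b‖)
    {x y : ℤ → K} (hx : F.IsOrbit a b x) (hy : F.IsOrbit a b y)
    (h : ∀ k, ‖x k - y k‖ ≤ (F.q : ℝ)⁻¹) : x = y := by
  funext k
  have hlim : Tendsto (fun n : ℕ => (F.q : ℝ)⁻¹ ^ (n + 1)) atTop (𝓝 0) :=
    (tendsto_pow_atTop_nhds_zero_of_lt_one F.q_inv_nonneg F.q_inv_lt_one).comp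
      (tendsto_add_atTop_nat 1)
  exact sub_eq_zero.1 <| norm_le_zero_iff.1 <| ge_of_tendsto' hlim fun n =>
    hx.norm_sub_le_of_forall_mem_Icc ha hb hy n k fun j _ => h j

end Orbits

section Attractor

variable (F) {a : K} (b : K)

def henonPerm (ha0 : a ≠ 0) : Equiv.Perm (K × K) where
  toFun := F.Tmap a b
  invFun := F.Tinv a b
  left_inv p := by simp [Tmap, Tinv, ha0]
  right_inv p := by simp [Tmap, Tinv, ha0]

variable {F b}

lemma henonPerm_apply (ha0 : a ≠ 0) (p : K × K) : F.henonPerm b ha0 p = F.Tmap a b p := rfl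

lemma IsOrbit.zpow_henonPerm_apply (ha0 : a ≠ 0) {x : ℤ → K} (hx : F.IsOrbit a b x) (k : ℤ) :
    (F.henonPerm b ha0 ^ k) (x 0, x (-1)) = (x k, x (k - 1)) :=
  Equiv.Perm.zpow_apply_of_forall_apply_eq _ (P := fun k => (x k, x (k - 1)))
    (fun k => by simp [henonPerm_apply, Tmap, hx.2 k]) k

lemma IsOrbit.eq_of_eq_at_zero (ha0 : a ≠ 0) {x y : ℤ → K} (hx : F.IsOrbit a b x)
    (hy : F.IsOrbit a b y) (h : (x 0, x (-1)) = (y 0, y (-1))) : x = y := by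
  funext k
  have hk := hx.zpow_henonPerm_apply ha0 k
  rw [h, hy.zpow_henonPerm_apply ha0 k] at hk
  exact (Prod.ext_iff.1 hk).1.symm

variable [IsUltrametricDist K]

lemma mapsTo_Tmap_unitPoly (ha : ‖a‖ ≤ 1) (hb : ‖b‖ ≤ F.q) :
    MapsTo (F.Tmap a b) (unitPoly K) (unitPoly K) := by
  rintro ⟨x, y⟩ ⟨hx, hy⟩
  refine ⟨(IsUltrametricDist.norm_add_le_max _ _).trans (max_le ?_ ?_), hx⟩
  · rw [norm_mul]; exact mul_le_one₀ ha (norm_nonneg _) hy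
  · rw [norm_mul]
    calc ‖b‖ * ‖x ^ F.q - x‖ ≤ F.q * (F.q : ℝ)⁻¹ :=
          mul_le_mul hb (norm_pow_q_sub_self_le hx) (norm_nonneg _) (Nat.cast_nonneg _)
      _ = 1 := mul_inv_cancel₀ (one_pos.trans F.one_lt_cast_q).ne'

lemma mem_attractor_iff (ha0 : a ≠ 0) (ha : ‖a‖ ≤ 1) (hb : ‖b‖ ≤ F.q) {p : K × K} :
    p ∈ F.Attractor a b ↔ ∀ k : ℤ, (F.henonPerm b ha0 ^ k) p ∈ unitPoly K := by
  set τ := F.henonPerm b ha0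
  have hiter : ∀ n : ℕ, (F.Tmap a b)^[n] = ⇑(τ ^ n) := fun n => by
    rw [Equiv.Perm.coe_pow]; rfl
  have hmaps : ∀ n : ℕ, MapsTo ⇑(τ ^ n) (unitPoly K) (unitPoly K) := fun n => by
    rw [← hiter]; exact (mapsTo_Tmap_unitPoly ha hb).iterate n
  have himage : ∀ n : ℕ, p ∈ ⇑(τ ^ n) '' unitPoly K ↔ (τ ^ (-(n : ℤ))) p ∈ unitPoly K := by
    intro n
    rw [Equiv.image_eq_preimage_symm]
    simp [zpow_neg]
  simp only [Attractor, Set.mem_iInter, Set.mem_ofPred_eq, hiter, himage]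
  refine ⟨fun h k => ?_, fun h n _ => h _⟩
  rcases lt_or_ge k 0 with hk | hk
  · obtain ⟨n, rfl⟩ := Int.exists_eq_neg_ofNat hk.le
    exact h n (by omega)
  · obtain ⟨m, rfl⟩ := Int.eq_ofNat_of_zero_le hk
    have : (τ ^ (m : ℤ)) p = (τ ^ (m + 1)) ((τ ^ (-1 : ℤ)) p) := by
      rw [← Equiv.Perm.mul_apply, ← zpow_natCast, ← zpow_add]
      congr 2; push_cast; ring
    rw [this]
    exact hmaps (m + 1) (by simpa using h 1 le_rfl)

lemma mem_attractor_iff_exists_isOrbit (ha0 : a ≠ 0) (ha : ‖a‖ ≤ 1) (hb : ‖b‖ ≤ F.q)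
    {p : K × K} : p ∈ F.Attractor a b ↔ ∃ x, F.IsOrbit a b x ∧ (x 0, x (-1)) = p := by
  rw [mem_attractor_iff ha0 ha hb]
  constructor
  · intro h
    set τ := F.henonPerm b ha0
    have hsucc : ∀ k : ℤ, (τ ^ (k + 1)) p = F.Tmap a b ((τ ^ k) p) := fun k => by
      rw [add_comm, zpow_add, zpow_one, Equiv.Perm.mul_apply]; rfl
    have hsnd : ∀ k : ℤ, ((τ ^ k) p).2 = ((τ ^ (k - 1)) p).1 := fun k => by
      rw [← sub_add_cancel k 1, hsucc, add_sub_cancel_right]; rfl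
    refine ⟨fun k => ((τ ^ k) p).1, ⟨fun k => (h k).1, fun k => ?_⟩, ?_⟩
    · simp only [hsucc, Tmap, hsnd]
    · ext
      · simp
      · simpa using (hsnd 0).symm
  · rintro ⟨x, hx, rfl⟩ k
    rw [hx.zpow_henonPerm_apply]
    exact ⟨hx.1 k, hx.1 (k - 1)⟩

end Attractor

section Shadowing

variable {a b : K}

lemma IsOrbit.comp_add_one {x : ℤ → K} (hx : F.IsOrbit a b x) :
    F.IsOrbit a b fun k => x (k + 1) :=
  ⟨fun _ => hx.1 _, fun k => by simpa [sub_add_cancel, add_sub_cancel_right] using hx.2 (k + 1)⟩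

variable [IsUltrametricDist K] [CompleteSpace K] (ha : ‖a‖ ≤ 1) (hb : (F.q : ℝ) ≤ ‖b‖)

def shadowingOrbit (s : ℤ → F.reps) : ℤ → K :=
  (exists_isOrbit_norm_sub_le ha hb (s := fun k => s k) fun k => F.norm_reps _ (s k).2).choose

variable {ha hb}

lemma isOrbit_shadowingOrbit (s : ℤ → F.reps) : F.IsOrbit a b (shadowingOrbit ha hb s) :=
  (exists_isOrbit_norm_sub_le ha hb (s := fun k => s k) fun k => F.norm_reps _ (s k).2)
    |>.choose_spec.1

lemma norm_shadowingOrbit_sub_le (s : ℤ → F.reps) (k : ℤ) :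
    ‖shadowingOrbit ha hb s k - s k‖ ≤ (F.q : ℝ)⁻¹ :=
  (exists_isOrbit_norm_sub_le ha hb (s := fun k => s k) fun k => F.norm_reps _ (s k).2)
    |>.choose_spec.2 k

lemma shadowingOrbit_eq {s : ℤ → F.reps} {x : ℤ → K} (hx : F.IsOrbit a b x)
    (hxs : ∀ k, ‖x k - s k‖ ≤ (F.q : ℝ)⁻¹) : shadowingOrbit ha hb s = x :=
  (isOrbit_shadowingOrbit s).eq_of_forall_norm_sub_le ha hb hx fun k =>
    norm_sub_le_of_le_of_le (norm_shadowingOrbit_sub_le s k) (hxs k)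

lemma shadowingOrbit_shift (s : ℤ → F.reps) :
    shadowingOrbit ha hb (fun k => s (k + 1)) = fun k => shadowingOrbit ha hb s (k + 1) :=
  shadowingOrbit_eq (isOrbit_shadowingOrbit s).comp_add_one fun k =>
    norm_shadowingOrbit_sub_le s (k + 1)

lemma shadowingOrbit_injective : Function.Injective (shadowingOrbit ha hb (F := F)) := by
  intro s t hst
  funext k
  by_contra hne
  refine (F.reps_sep _ (s k).2 _ (t k).2 (Subtype.coe_ne_coe.2 hne)).not_ge ?_
  have hs := norm_shadowingOrbit_sub_le (ha := ha) (hb := hb) s k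
  have ht := norm_shadowingOrbit_sub_le (ha := ha) (hb := hb) t k
  rw [hst, norm_sub_rev] at hs
  rw [norm_sub_rev] at ht
  exact norm_sub_le_of_le_of_le hs ht

lemma exists_shadowingOrbit_eq {x : ℤ → K} (hx : F.IsOrbit a b x) :
    ∃ s, shadowingOrbit ha hb s = x := by
  choose t ht hxt using fun k => F.reps_cover (x k) (hx.1 k)
  exact ⟨fun k => ⟨t k, ht k⟩, shadowingOrbit_eq hx hxt⟩

lemma continuous_shadowingOrbit_apply (k : ℤ) :
    Continuous fun s => shadowingOrbit ha hb (F := F) s k := by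
  refine continuous_iff_continuousAt.2 fun s => Metric.tendsto_nhds.2 fun ε hε => ?_
  obtain ⟨n, hn⟩ := exists_pow_lt_of_lt_one hε F.q_inv_lt_one
  have hagree : ∀ᶠ t in 𝓝 s, ∀ j ∈ Finset.Icc (k - n) (k + n), t j = s j :=
    (Finset.eventually_all _).2 fun j _ =>
      (continuous_apply j).continuousAt.eventually_mem
        ((isOpen_discrete {s j}).mem_nhds (Set.mem_singleton _))
  filter_upwards [hagree] with t ht
  rw [dist_eq_norm]
  refine lt_of_le_of_lt ?_ hn
  refine ((isOrbit_shadowingOrbit t).norm_sub_le_of_forall_mem_Icc ha hb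
    (isOrbit_shadowingOrbit s) n k fun j hj => ?_).trans
    (pow_le_pow_of_le_one F.q_inv_nonneg F.q_inv_lt_one.le n.le_succ)
  exact norm_sub_le_of_le_of_le (norm_shadowingOrbit_sub_le t j)
    (ht j hj ▸ norm_shadowingOrbit_sub_le s j)

end Shadowing

section Coding

variable {a b : K} [IsUltrametricDist K] [CompleteSpace K] (ha0 : a ≠ 0) (ha : ‖a‖ ≤ 1)
  (hb : ‖b‖ = F.q)

def coding (s : ℤ → F.reps) : F.Attractor a b :=
  let x := shadowingOrbit ha hb.ge s
  ⟨(x 0, x (-1)), (mem_attractor_iff_exists_isOrbit ha0 ha hb.le).2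
    ⟨x, isOrbit_shadowingOrbit s, rfl⟩⟩

lemma continuous_coding : Continuous (coding ha0 ha hb) :=
  ((continuous_shadowingOrbit_apply 0).prodMk (continuous_shadowingOrbit_apply (-1))).subtype_mk _

lemma bijective_coding : Function.Bijective (coding ha0 ha hb) := by
  refine ⟨fun s t hst => shadowingOrbit_injective (ha := ha) (hb := hb.ge) ?_, fun p => ?_⟩
  · exact (isOrbit_shadowingOrbit s).eq_of_eq_at_zero ha0 (isOrbit_shadowingOrbit t)
      (congr_arg Subtype.val hst)
  · obtain ⟨x, hx, hxp⟩ := (mem_attractor_iff_exists_isOrbit ha0 ha hb.le).1 p.2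
    obtain ⟨s, rfl⟩ := exists_shadowingOrbit_eq (ha := ha) (hb := hb.ge) hx
    exact ⟨s, Subtype.ext hxp⟩

lemma coding_shift (s : ℤ → F.reps) :
    (coding ha0 ha hb fun k => s (k + 1)) = F.Tmap a b (coding ha0 ha hb s) := by
  have hx := (isOrbit_shadowingOrbit (ha := ha) (hb := hb.ge) s).2 0
  rw [zero_add, zero_sub] at hx
  simp only [coding, shadowingOrbit_shift, Tmap, zero_add, neg_add_cancel, hx]

end Coding

end NAField

open NAField in
theorem stmt14 (F : NAField K) (a b : K) (ha0 : a ≠ 0) (ha : ‖a‖ < 1)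
    (hb : ‖b‖ = (F.q : ℝ)) :
    ∃ ω : (ℤ → {s : K // s ∈ F.reps}) ≃ₜ {p : K × K // p ∈ F.Attractor a b},
      ∀ s : ℤ → {s : K // s ∈ F.reps},
        ((ω fun k => s (k + 1)) : K × K) = F.Tmap a b (ω s) := by
  have := F.complete
  have := F.isUltrametricDist
  exact ⟨(continuous_coding ha0 ha.le hb).homeoOfEquivCompactToT2
    (f := .ofBijective _ (bijective_coding ha0 ha.le hb)), coding_shift ha0 ha.le hb⟩
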